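/- Let k ≥ 2 and let T be any clause tree for x₁,…,x_k. The translation of the clause x₁ ∨ ⋯ ∨ x_k into Tᵗ(T) with the root's auxiliary variable replaced by the constant true is a strict (k−1, 3(k−1)/2)-gadget from kSAT to Max2XOR with k−2 auxiliary variables: its total weight is 3(k−1)/2; for every assignment I of x₁,…,x_k satisfying the clause, every extension of I to the non-root internal variables has value at most k−1 and some extension attains k−1; and for every I falsifying the clause, every extension has value at most k−2 and some extension attains k−2. -/

import Mathlib

/-- A (candidate) clause tree: a full binary tree whose leaves are labeled by (indices of)
the clause variables x_i and whose internal nodes carry (indices of) auxiliary variables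
b_v.  Leaf labels are interpreted by an assignment `x : ℕ → Bool` and internal labels by
an assignment `b : ℕ → Bool`. -/
inductive ClauseTree : Type
  | leaf (i : ℕ)
  | node (v : ℕ) (l r : ClauseTree)

namespace ClauseTree

/-- Labels of the leaves, left to right. -/
def leaves : ClauseTree → List ℕ
  | leaf i => [i]
  | node _ l r => leaves l ++ leaves r

/-- Labels of the internal nodes. -/
def internals : ClauseTree → List ℕ
  | leaf _ => []
  | node v l r => v :: (internals l ++ internals r)

/-- `t` is a clause tree for x₁,…,x_k: its leaves are labeled bijectively by 1,…,k and
its internal auxiliary variables are pairwise distinct (they are fresh by construction,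
living in a namespace separate from the leaf labels). -/
def IsClauseTree (k : ℕ) (t : ClauseTree) : Prop :=
  t.leaves.Nodup ∧ (∀ i, i ∈ t.leaves ↔ i ∈ Finset.Icc 1 k) ∧ t.internals.Nodup

/-- var(v) of the root of `t`: the value of the leaf variable if `t` is a leaf, and the
value of the auxiliary variable b_v if the root is an internal node v. -/
def rootVar (x b : ℕ → Bool) : ClauseTree → Bool
  | leaf i => x i
  | node v _ _ => b v

/-- Number of satisfied constraints among the triangle {p ⊕ q = 1, p ⊕ r = 0, q ⊕ r = 0}. -/
def triCount (p q r : Bool) : ℕ :=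
  (if xor p q = true then 1 else 0) +
  (if xor p r = false then 1 else 0) +
  (if xor q r = false then 1 else 0)

/-- Number of constraints of Tᵗ(t) satisfied by the assignment given by `x` and `b`:
for every internal node v with children u, w, the triangle
{var(u) ⊕ var(w) = 1, var(u) ⊕ b_v = 0, var(w) ⊕ b_v = 0} (each of weight 1/2). -/
def countSat (x b : ℕ → Bool) : ClauseTree → ℕ
  | leaf _ => 0
  | node v l r =>
      countSat x b l + countSat x b r + triCount (rootVar x b l) (rootVar x b r) (b v)

/-- Total number of constraints of Tᵗ(t). -/
def numConstraints : ClauseTree → ℕ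
  | leaf _ => 0
  | node _ l r => numConstraints l + numConstraints r + 3

/-- The OR of the values of the leaves below (the root of) `t`. -/
def orLeaves (x : ℕ → Bool) : ClauseTree → Bool
  | leaf i => x i
  | node _ l r => orLeaves x l || orLeaves x r

/-- The assignment `b` of the internal auxiliary variables agrees with the canonical
extension of `x`: every internal node v gets the OR of the values of the leaves below v. -/
def Agrees (x b : ℕ → Bool) : ClauseTree → Prop
  | leaf _ => True
  | node v l r => b v = orLeaves x (node v l r) ∧ Agrees x b l ∧ Agrees x b r

end ClauseTree

/-- Value (total satisfied weight, each constraint having weight 1/2) of Tᵗ(t). -/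
def ClauseTree.val (x b : ℕ → Bool) (t : ClauseTree) : ℚ :=
  (ClauseTree.countSat x b t : ℚ) / 2

/-!
Giving every internal node the OR of the leaves below it satisfies two constraints of each
triangle, the maximum possible, so Tᵗ(T) has optimum k − 1 and its root then carries the value
of the clause. Forcing the root to `true` costs nothing when the clause is satisfied. When it is
falsified, follow the nodes whose variable is `true` down from the root: this path must stop at
a node whose children are both `false` (the leaves are all `false`), and there the triangle
`false, false, true` satisfies no constraint, so one unit of value is lost.
-/

namespace ClauseTree

lemma triCount_le_two (p q c : Bool) : triCount p q c ≤ 2 := by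
  revert p q c; decide

lemma triCount_or_self (p q : Bool) : triCount p q (p || q) = 2 := by
  revert p q; decide

lemma triCount_true (p q : Bool) : triCount p q true = 2 * (p || q).toNat := by
  revert p q; decide

lemma triCount_add_le (p q c : Bool) :
    triCount p q c + 2 * c.toNat ≤ 2 + 2 * p.toNat + 2 * q.toNat := by
  revert p q c; decide

lemma length_leaves (t : ClauseTree) : t.leaves.length = t.internals.length + 1 := by
  induction t with
  | leaf => rfl
  | node v l r ihl ihr =>
    simp only [leaves, internals, List.length_append, ihl, ihr, List.length_cons]
    omega

lemma numConstraints_eq (t : ClauseTree) : t.numConstraints = 3 * t.internals.length := by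
  induction t with
  | leaf => rfl
  | node v l r ihl ihr =>
    simp only [numConstraints, internals, ihl, ihr, List.length_cons, List.length_append]
    ring

lemma orLeaves_eq_true_iff (x : ℕ → Bool) (t : ClauseTree) :
    orLeaves x t = true ↔ ∃ i ∈ t.leaves, x i = true := by
  induction t with
  | leaf => simp [orLeaves, leaves]
  | node v l r ihl ihr => simp [orLeaves, leaves, ihl, ihr, or_and_right, exists_or]

section Congr

variable {x b b' : ℕ → Bool} {t : ClauseTree}

lemma Agrees.congr (h : ∀ n ∈ t.internals, b n = b' n) (hb : Agrees x b t) :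
    Agrees x b' t := by
  induction t with
  | leaf => trivial
  | node v l r ihl ihr =>
    obtain ⟨hv, hl, hr⟩ := hb
    exact ⟨h v List.mem_cons_self ▸ hv, ihl (fun n hn => h n (by simp [internals, hn])) hl,
      ihr (fun n hn => h n (by simp [internals, hn])) hr⟩

lemma Agrees.update {v : ℕ} (c : Bool) (hv : v ∉ t.internals) (hb : Agrees x b t) :
    Agrees x (Function.update b v c) t :=
  hb.congr fun _ hn => (Function.update_of_ne (ne_of_mem_of_not_mem hn hv) c b).symm

end Congr

section UpperBound

variable (x b : ℕ → Bool)

lemma countSat_le (t : ClauseTree) : countSat x b t ≤ 2 * t.internals.length := by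
  induction t with
  | leaf => simp [countSat]
  | node v l r ihl ihr =>
    have := triCount_le_two (rootVar x b l) (rootVar x b r) (b v)
    simp only [countSat, internals, List.length_cons, List.length_append]
    omega

lemma countSat_add_rootVar_le {t : ClauseTree} (h : orLeaves x t = false) :
    countSat x b t + 2 * (rootVar x b t).toNat ≤ 2 * t.internals.length := by
  induction t with
  | leaf => simp_all [countSat, rootVar, orLeaves]
  | node v l r ihl ihr =>
    simp only [orLeaves, Bool.or_eq_false_iff] at h
    have := triCount_add_le (rootVar x b l) (rootVar x b r) (b v)
    have := ihl h.1
    have := ihr h.2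
    rw [countSat, rootVar, internals, List.length_cons, List.length_append]
    omega

lemma countSat_add_two_le {t : ClauseTree} (h : rootVar x b t = true) :
    countSat x b t + 2 ≤ 2 * t.internals.length + 2 * (orLeaves x t).toNat := by
  cases ho : orLeaves x t
  · simpa [h] using countSat_add_rootVar_le x b ho
  · simpa using countSat_le x b t

end UpperBound

section Canonical

variable {x b : ℕ → Bool} {t : ClauseTree}

lemma Agrees.rootVar_eq (hb : Agrees x b t) : rootVar x b t = orLeaves x t := by
  cases t with
  | leaf => rfl
  | node v l r => exact hb.1

lemma Agrees.countSat_eq (hb : Agrees x b t) : countSat x b t = 2 * t.internals.length := by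
  induction t with
  | leaf => rfl
  | node v l r ihl ihr =>
    obtain ⟨hv, hl, hr⟩ := hb
    simp only [countSat, ihl hl, ihr hr, hl.rootVar_eq, hr.rootVar_eq, hv, orLeaves,
      triCount_or_self, internals, List.length_cons, List.length_append]
    ring

lemma exists_agrees (x : ℕ → Bool) (hnd : t.internals.Nodup) : ∃ b, Agrees x b t := by
  induction t with
  | leaf => exact ⟨fun _ => true, trivial⟩
  | node v l r ihl ihr =>
    simp only [internals, List.nodup_cons, List.nodup_append, List.mem_append, not_or] at hnd
    obtain ⟨⟨hvl, hvr⟩, hl, hr, hdisj⟩ := hnd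
    obtain ⟨bl, hbl⟩ := ihl hl
    obtain ⟨br, hbr⟩ := ihr hr
    let g : ℕ → Bool := fun n => if n ∈ l.internals then bl n else br n
    have hgl : Agrees x g l := hbl.congr fun n hn => by simp [g, hn]
    have hgr : Agrees x g r := hbr.congr fun n hn => by
      have : n ∉ l.internals := fun h => hdisj n h n hn rfl
      simp [g, this]
    exact ⟨Function.update g v (orLeaves x (node v l r)), by simp,
      hgl.update _ hvl, hgr.update _ hvr⟩

end Canonical

lemma exists_countSat_add_two_eq (x : ℕ → Bool) {v : ℕ} {l r : ClauseTree}
    (hnd : (node v l r).internals.Nodup) :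
    ∃ b, b v = true ∧ countSat x b (node v l r) + 2 =
      2 * (node v l r).internals.length + 2 * (orLeaves x (node v l r)).toNat := by
  obtain ⟨b, -, hl, hr⟩ := exists_agrees x hnd
  simp only [internals, List.nodup_cons, List.mem_append, not_or] at hnd
  have hl' := hl.update true hnd.1.1
  have hr' := hr.update true hnd.1.2
  refine ⟨Function.update b v true, by simp, ?_⟩
  simp only [countSat, hl'.countSat_eq, hr'.countSat_eq, hl'.rootVar_eq, hr'.rootVar_eq,
    Function.update_self, triCount_true, orLeaves, internals, List.length_cons,
    List.length_append]
  ring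

lemma val_add_one_le (x b : ℕ → Bool) {t : ClauseTree} (h : rootVar x b t = true) :
    val x b t + 1 ≤ t.internals.length + (orLeaves x t).toNat := by
  have : (countSat x b t : ℚ) + 2 ≤ 2 * t.internals.length + 2 * (orLeaves x t).toNat := by
    exact_mod_cast countSat_add_two_le x b h
  rw [val]
  linarith

lemma exists_val_add_one_eq (x : ℕ → Bool) {v : ℕ} {l r : ClauseTree}
    (hnd : (node v l r).internals.Nodup) :
    ∃ b, b v = true ∧ val x b (node v l r) + 1 =
      (node v l r).internals.length + (orLeaves x (node v l r)).toNat := by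
  obtain ⟨b, hb, h⟩ := exists_countSat_add_two_eq x hnd
  have : (countSat x b (node v l r) : ℚ) + 2 =
      2 * (node v l r).internals.length + 2 * (orLeaves x (node v l r)).toNat := by
    exact_mod_cast h
  refine ⟨b, hb, ?_⟩
  rw [val]
  linarith

namespace IsClauseTree

variable {k : ℕ} {t : ClauseTree}

lemma length_internals_add_one (ht : IsClauseTree k t) : t.internals.length + 1 = k := by
  have hfin : t.leaves.toFinset = Finset.Icc 1 k := by ext i; simpa using ht.2.1 i
  rw [← length_leaves, ← List.toFinset_card_of_nodup ht.1, hfin, Nat.card_Icc]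
  omega

lemma orLeaves_eq_true_iff (ht : IsClauseTree k t) (x : ℕ → Bool) :
    orLeaves x t = true ↔ ∃ i ∈ Finset.Icc 1 k, x i = true := by
  simp only [ClauseTree.orLeaves_eq_true_iff, ht.2.1]

end IsClauseTree

end ClauseTree

open ClauseTree in
theorem clause_tree_is_strict_gadget_general (k : ℕ)
    (v₀ : ℕ) (l r : ClauseTree)
    (ht : ClauseTree.IsClauseTree k (ClauseTree.node v₀ l r)) :
    ((ClauseTree.numConstraints (ClauseTree.node v₀ l r) : ℚ) / 2 = 3 * ((k : ℚ) - 1) / 2) ∧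
    (∀ x : ℕ → Bool, (∃ i ∈ Finset.Icc 1 k, x i = true) →
      (∀ b : ℕ → Bool, b v₀ = true →
        ClauseTree.val x b (ClauseTree.node v₀ l r) ≤ (k : ℚ) - 1) ∧
      (∃ b : ℕ → Bool, b v₀ = true ∧
        ClauseTree.val x b (ClauseTree.node v₀ l r) = (k : ℚ) - 1)) ∧
    (∀ x : ℕ → Bool, (∀ i ∈ Finset.Icc 1 k, x i = false) →
      (∀ b : ℕ → Bool, b v₀ = true →
        ClauseTree.val x b (ClauseTree.node v₀ l r) ≤ (k : ℚ) - 2) ∧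
      (∃ b : ℕ → Bool, b v₀ = true ∧
        ClauseTree.val x b (ClauseTree.node v₀ l r) = (k : ℚ) - 2)) := by
  have hlen : ((node v₀ l r).internals.length : ℚ) = k - 1 := by
    rw [← ht.length_internals_add_one]; push_cast; ring
  have hle := fun x b (hb : b v₀ = true) => hlen ▸ val_add_one_le x b (t := node v₀ l r) hb
  have hex := fun x => hlen ▸ exists_val_add_one_eq x ht.2.2
  refine ⟨by rw [numConstraints_eq]; push_cast [hlen]; ring, fun x hx => ?_, fun x hx => ?_⟩
  · have ho : orLeaves x (node v₀ l r) = true := (ht.orLeaves_eq_true_iff x).2 hx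
    obtain ⟨b, hb, h⟩ := hex x
    refine ⟨fun b hb => ?_, b, hb, ?_⟩
    · have := hle x b hb; simp only [ho, Bool.toNat_true, Nat.cast_one] at this; linarith
    · simp only [ho, Bool.toNat_true, Nat.cast_one] at h; linarith
  · have ho : orLeaves x (node v₀ l r) = false := by
      rw [← Bool.not_eq_true, ht.orLeaves_eq_true_iff]
      rintro ⟨i, hi, hxi⟩
      simp [hx i hi] at hxi
    obtain ⟨b, hb, h⟩ := hex x
    refine ⟨fun b hb => ?_, b, hb, ?_⟩
    · have := hle x b hb; simp only [ho, Bool.toNat_false, Nat.cast_zero] at this; linarith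
    · simp only [ho, Bool.toNat_false, Nat.cast_zero] at h; linarith

theorem clause_tree_is_strict_gadget (k : ℕ) (hk : 2 ≤ k)
    (v₀ : ℕ) (l r : ClauseTree)
    (ht : ClauseTree.IsClauseTree k (ClauseTree.node v₀ l r)) :
    ((ClauseTree.numConstraints (ClauseTree.node v₀ l r) : ℚ) / 2 = 3 * ((k : ℚ) - 1) / 2) ∧
    (∀ x : ℕ → Bool, (∃ i ∈ Finset.Icc 1 k, x i = true) →
      (∀ b : ℕ → Bool, b v₀ = true →
        ClauseTree.val x b (ClauseTree.node v₀ l r) ≤ (k : ℚ) - 1) ∧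
      (∃ b : ℕ → Bool, b v₀ = true ∧
        ClauseTree.val x b (ClauseTree.node v₀ l r) = (k : ℚ) - 1)) ∧
    (∀ x : ℕ → Bool, (∀ i ∈ Finset.Icc 1 k, x i = false) →
      (∀ b : ℕ → Bool, b v₀ = true →
        ClauseTree.val x b (ClauseTree.node v₀ l r) ≤ (k : ℚ) - 2) ∧
      (∃ b : ℕ → Bool, b v₀ = true ∧
        ClauseTree.val x b (ClauseTree.node v₀ l r) = (k : ℚ) - 2)) :=
  clause_tree_is_strict_gadget_general k v₀ l r ht
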